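/- arXiv:2605.21849 — 2 statements merged into one kernel-verified Lean document; each statement's English description precedes it below -/
import Mathlib

section
/- Let M be a real symmetric positive semidefinite d×d matrix with eigenvalues λ_1(M) ≥ … ≥ λ_d(M), let 1 ≤ r < d, and suppose the eigengap γ := λ_r(M) − λ_{r+1}(M) is strictly positive. Let Π_OOD be the orthogonal projector onto the span of eigenvectors of M corresponding to its r largest eigenvalues. Then for every d×d real orthogonal projection matrix Π of rank r (i.e., Π symmetric, Π² = Π, rank Π = r), the following two-sided bound holds: (γ/2)·‖Π_OOD − Π‖_F² ≤ tr[(Π_OOD − Π)·M] ≤ ((λ_1(M) − λ_d(M))/2)·‖Π_OOD − Π‖_F². -/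
/-!
Write `Q` for the top-`r` eigenprojector and `w i = u iᵀ (Q - P) u i`. Since `P` and `Q` are
orthogonal projections of the same trace `r`, the weights satisfy `w i ≥ 0` on the top `r`
indices, `w i ≤ 0` on the others and `∑ w i = 0`; moreover `‖Q - P‖_F² = 2 tr (Q (Q - P))` is
twice the total weight on the top indices, while `tr ((Q - P) M) = ∑ λ i * w i`. Both bounds are
then elementary estimates of `∑ λ i * w i` for antitone `λ` against weights with this sign
pattern.
-/

open Matrix BigOperators

noncomputable def frobNorm {m n : ℕ} (A : Matrix (Fin m) (Fin n) ℝ) : ℝ :=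
  Real.sqrt (∑ i, ∑ j, (A i j) ^ 2)

theorem Matrix.trace_eq_rank_of_mul_self {n K : Type*} [Fintype n] [DecidableEq n] [Field K]
    {P : Matrix n n K} (h : P * P = P) : P.trace = P.rank := by
  have hP : IsIdempotentElem (toLinAlgEquiv' P) := IsIdempotentElem.map h _
  rw [← Matrix.trace_toLin'_eq]
  exact ((LinearMap.isProj_range_iff_isIdempotentElem _).2 hP).trace

theorem Matrix.dotProduct_mulVec_nonneg_of_isSymm_of_mul_self {n R : Type*} [Fintype n]
    [CommRing R] [LinearOrder R] [IsStrictOrderedRing R]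
    {P : Matrix n n R} (hs : P.IsSymm) (hi : P * P = P) (v : n → R) :
    0 ≤ v ⬝ᵥ P *ᵥ v := by
  rw [← hi, ← mulVec_mulVec, dotProduct_mulVec, ← hs.eq, vecMul_transpose, hs.eq]
  exact Finset.sum_nonneg fun i _ => mul_self_nonneg _

theorem frobNorm_sq {m n : ℕ} (A : Matrix (Fin m) (Fin n) ℝ) :
    frobNorm A ^ 2 = (A * Aᵀ).trace := by
  rw [frobNorm, Real.sq_sqrt (by positivity)]
  simp only [trace, Matrix.diag, mul_apply, transpose_apply, sq]

theorem frobNorm_sub_sq_of_isSymm_of_mul_self {d : ℕ} {P Q : Matrix (Fin d) (Fin d) ℝ}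
    (hPs : P.IsSymm) (hPi : P * P = P) (hQs : Q.IsSymm) (hQi : Q * Q = Q)
    (htr : P.trace = Q.trace) :
    frobNorm (Q - P) ^ 2 = 2 * (Q * (Q - P)).trace := by
  rw [frobNorm_sq, transpose_sub, hPs.eq, hQs.eq]
  simp only [sub_mul, mul_sub, hPi, hQi, trace_sub, trace_mul_comm P Q]
  linarith

section Orthonormal

variable {n R : Type*} [CommRing R] {u : n → n → R}

def orthProj (u : n → n → R) (T : Finset n) : Matrix n n R :=
  ∑ i ∈ T, vecMulVec (u i) (u i)

theorem orthProj_isSymm (T : Finset n) : (orthProj u T).IsSymm := by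
  simp [IsSymm, orthProj, transpose_sum, transpose_vecMulVec]

variable [Fintype n]

theorem trace_orthProj_mul (T : Finset n) (X : Matrix n n R) :
    (orthProj u T * X).trace = ∑ i ∈ T, u i ⬝ᵥ X *ᵥ u i := by
  simp only [orthProj, Finset.sum_mul, trace_sum, trace_mul_comm _ X, mul_vecMulVec,
    trace_vecMulVec, dotProduct_comm]

variable [DecidableEq n]

theorem sum_vecMulVec_self_eq_one (hu : ∀ i j, u i ⬝ᵥ u j = if i = j then 1 else 0) :
    ∑ i, vecMulVec (u i) (u i) = 1 := by
  -- `n` orthonormal vectors in `n`-space: `U Uᵀ = 1` forces `Uᵀ U = 1`.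
  have hUUt : of u * (of u)ᵀ = 1 := by
    ext i j
    simpa [mul_apply, one_apply, dotProduct] using hu i j
  rw [← mul_eq_one_comm.mp hUUt]
  ext a b
  simp [mul_apply, vecMulVec_apply, Matrix.sum_apply]

theorem trace_eq_sum_dotProduct_mulVec (hu : ∀ i j, u i ⬝ᵥ u j = if i = j then 1 else 0)
    (X : Matrix n n R) : X.trace = ∑ i, u i ⬝ᵥ X *ᵥ u i := by
  conv_lhs => rw [← mul_one X, ← sum_vecMulVec_self_eq_one hu, Finset.mul_sum, trace_sum]
  simp only [mul_vecMulVec, trace_vecMulVec, dotProduct_comm]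

theorem trace_mul_eq_sum_eigenvalues (hu : ∀ i j, u i ⬝ᵥ u j = if i = j then 1 else 0)
    {M : Matrix n n R} {lam : n → R} (heig : ∀ i, M *ᵥ u i = lam i • u i) (X : Matrix n n R) :
    (X * M).trace = ∑ i, lam i * (u i ⬝ᵥ X *ᵥ u i) := by
  simp only [trace_eq_sum_dotProduct_mulVec hu, ← mulVec_mulVec, heig, mulVec_smul,
    dotProduct_smul, smul_eq_mul]

theorem orthProj_mulVec (hu : ∀ i j, u i ⬝ᵥ u j = if i = j then 1 else 0) (T : Finset n)
    (j : n) : orthProj u T *ᵥ u j = if j ∈ T then u j else 0 := by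
  simp [orthProj, sum_mulVec, vecMulVec_mulVec, hu, Finset.sum_ite_eq']

theorem orthProj_mul_self (hu : ∀ i j, u i ⬝ᵥ u j = if i = j then 1 else 0) (T : Finset n) :
    orthProj u T * orthProj u T = orthProj u T := by
  conv_lhs => enter [2]; rw [orthProj]
  refine (Finset.mul_sum _ _ _).trans (Finset.sum_congr rfl fun i hi => ?_)
  rw [mul_vecMulVec, orthProj_mulVec hu, if_pos hi]

theorem trace_orthProj (hu : ∀ i j, u i ⬝ᵥ u j = if i = j then 1 else 0) (T : Finset n) :
    (orthProj u T).trace = T.card := by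
  simp [orthProj, trace_sum, hu]

end Orthonormal

section Weights

variable {n R : Type*} [Fintype n] [DecidableEq n] [CommRing R] [LinearOrder R]
  [IsStrictOrderedRing R] {u : n → n → R} {P : Matrix n n R}

theorem dotProduct_orthProj_sub_mulVec_nonneg (hu : ∀ i j, u i ⬝ᵥ u j = if i = j then 1 else 0)
    (hPs : P.IsSymm) (hPi : P * P = P) {T : Finset n} {i : n} (hi : i ∈ T) :
    0 ≤ u i ⬝ᵥ (orthProj u T - P) *ᵥ u i := by
  have hQs : (1 - P).IsSymm := by simp [IsSymm, transpose_sub, hPs.eq]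
  have hQi : (1 - P) * (1 - P) = 1 - P := by simp [sub_mul, mul_sub, hPi]
  simpa [sub_mulVec, orthProj_mulVec hu, hi] using
    dotProduct_mulVec_nonneg_of_isSymm_of_mul_self hQs hQi (u i)

theorem dotProduct_orthProj_sub_mulVec_nonpos (hu : ∀ i j, u i ⬝ᵥ u j = if i = j then 1 else 0)
    (hPs : P.IsSymm) (hPi : P * P = P) {T : Finset n} {i : n} (hi : i ∉ T) :
    u i ⬝ᵥ (orthProj u T - P) *ᵥ u i ≤ 0 := by
  simpa [sub_mulVec, orthProj_mulVec hu, hi] using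
    dotProduct_mulVec_nonneg_of_isSymm_of_mul_self hPs hPi (u i)

end Weights

section SignedSums

variable {ι : Type*} [Fintype ι] {T : Finset ι} {lam w : ι → ℝ}

theorem sub_mul_sum_le_sum_mul (hw : ∑ i, w i = 0) (hwT : ∀ i ∈ T, 0 ≤ w i)
    (hwTc : ∀ i ∉ T, w i ≤ 0) {a b : ℝ} (ha : ∀ i ∈ T, a ≤ lam i) (hb : ∀ i ∉ T, lam i ≤ b) :
    (a - b) * ∑ i ∈ T, w i ≤ ∑ i, lam i * w i := by
  classical
  rw [← Finset.sum_add_sum_compl T] at hw ⊢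
  have hT : a * ∑ i ∈ T, w i ≤ ∑ i ∈ T, lam i * w i := by
    rw [Finset.mul_sum]
    exact Finset.sum_le_sum fun i hi => mul_le_mul_of_nonneg_right (ha i hi) (hwT i hi)
  have hTc : b * ∑ i ∈ Tᶜ, w i ≤ ∑ i ∈ Tᶜ, lam i * w i := by
    rw [Finset.mul_sum]
    refine Finset.sum_le_sum fun i hi => ?_
    rw [Finset.mem_compl] at hi
    exact mul_le_mul_of_nonpos_right (hb i hi) (hwTc i hi)
  rw [eq_neg_of_add_eq_zero_right hw] at hTc
  linarith

theorem sum_mul_le_sub_mul_sum (hw : ∑ i, w i = 0) (hwT : ∀ i ∈ T, 0 ≤ w i)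
    (hwTc : ∀ i ∉ T, w i ≤ 0) {a b : ℝ} (ha : ∀ i, lam i ≤ a) (hb : ∀ i, b ≤ lam i) :
    ∑ i, lam i * w i ≤ (a - b) * ∑ i ∈ T, w i := by
  classical
  rw [← Finset.sum_add_sum_compl T] at hw ⊢
  have hT : ∑ i ∈ T, lam i * w i ≤ a * ∑ i ∈ T, w i := by
    rw [Finset.mul_sum]
    exact Finset.sum_le_sum fun i hi => mul_le_mul_of_nonneg_right (ha i) (hwT i hi)
  have hTc : ∑ i ∈ Tᶜ, lam i * w i ≤ b * ∑ i ∈ Tᶜ, w i := by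
    rw [Finset.mul_sum]
    refine Finset.sum_le_sum fun i hi => ?_
    rw [Finset.mem_compl] at hi
    exact mul_le_mul_of_nonpos_right (hb i) (hwTc i hi)
  rw [eq_neg_of_add_eq_zero_right hw] at hTc
  linarith

end SignedSums

/-- **Proposition 2 (Faithfulness gap controls the explainer-dependent term).**
Let `M` be real symmetric PSD with eigenvalues `lam` in nonincreasing order along an
orthonormal eigenbasis `u`, let `1 ≤ r < d` with positive eigengap
`γ = λ_r(M) − λ_{r+1}(M)`, and let `P_OOD` be the top-`r` eigenprojector. Then for every
rank-`r` orthogonal projection matrix `P`,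
`(γ/2)‖P_OOD − P‖_F² ≤ tr[(P_OOD − P)M] ≤ ((λ_1 − λ_d)/2)‖P_OOD − P‖_F²`. -/
theorem faithfulness_gap_controls_explainer_dependent_term
    {d r : ℕ} (hrd : r < d)
    (M : Matrix (Fin d) (Fin d) ℝ)
    (lam : Fin d → ℝ) (hlam : Antitone lam)
    (u : Fin d → Fin d → ℝ)
    (hu : ∀ i j, u i ⬝ᵥ u j = if i = j then (1 : ℝ) else 0)
    (heig : ∀ i, M.mulVec (u i) = lam i • u i)
    (P_OOD : Matrix (Fin d) (Fin d) ℝ)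
    (hPOOD : P_OOD = ∑ i ∈ Finset.univ.filter (fun i : Fin d => (i : ℕ) < r),
      vecMulVec (u i) (u i))
    (P : Matrix (Fin d) (Fin d) ℝ)
    (hPsymm : P.IsSymm) (hPidem : P * P = P) (hPrank : P.rank = r) :
    ((lam ⟨r - 1, by omega⟩ - lam ⟨r, hrd⟩) / 2) * frobNorm (P_OOD - P) ^ 2 ≤
        Matrix.trace ((P_OOD - P) * M) ∧
      Matrix.trace ((P_OOD - P) * M) ≤
        ((lam ⟨0, by omega⟩ - lam ⟨d - 1, by omega⟩) / 2) * frobNorm (P_OOD - P) ^ 2 := by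
  set T : Finset (Fin d) := {i | (i : ℕ) < r}
  obtain rfl : P_OOD = orthProj u T := hPOOD
  set w : Fin d → ℝ := fun i => u i ⬝ᵥ (orthProj u T - P) *ᵥ u i
  have htrace : P.trace = (orthProj u T).trace := by
    rw [trace_eq_rank_of_mul_self hPidem, hPrank, trace_orthProj hu, Fin.card_filter_val_lt,
      min_eq_right hrd.le]
  have hw : ∑ i, w i = 0 := by
    rw [← trace_eq_sum_dotProduct_mulVec hu, trace_sub, htrace, sub_self]
  have hfrob : frobNorm (orthProj u T - P) ^ 2 = 2 * ∑ i ∈ T, w i := by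
    rw [frobNorm_sub_sq_of_isSymm_of_mul_self hPsymm hPidem (orthProj_isSymm T)
      (orthProj_mul_self hu T) htrace, trace_orthProj_mul]
  have hwT : ∀ i ∈ T, 0 ≤ w i := fun i =>
    dotProduct_orthProj_sub_mulVec_nonneg hu hPsymm hPidem
  have hwTc : ∀ i ∉ T, w i ≤ 0 := fun i =>
    dotProduct_orthProj_sub_mulVec_nonpos hu hPsymm hPidem
  rw [trace_mul_eq_sum_eigenvalues hu heig, hfrob]
  constructor
  · have hlow := sub_mul_sum_le_sum_mul hw hwT hwTc
      (a := lam ⟨r - 1, by omega⟩) (b := lam ⟨r, hrd⟩)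
      (fun i hi => hlam (show (i : ℕ) ≤ r - 1 by simp [T] at hi; omega))
      (fun i hi => hlam (show r ≤ (i : ℕ) by simp [T] at hi; omega))
    linarith
  · have hup := sum_mul_le_sub_mul_sum hw hwT hwTc
      (a := lam ⟨0, by omega⟩) (b := lam ⟨d - 1, by omega⟩)
      (fun i => hlam (show 0 ≤ (i : ℕ) by omega))
      (fun i => hlam (show (i : ℕ) ≤ d - 1 by omega))
    linarith
end

section
/- Let h_1ᶜ, …, h_Nᶜ ∈ ℝ^d and z_1ᶜ, …, z_Nᶜ ∈ ℝ^k be centered data (each family summing to zero), let Π̂ be a d×d real orthogonal projection matrix, let W̃ ∈ ℝ^{d×k}, and let λ_geom ≥ 0, λ_pres > 0. Define B := (1/N)Σ_i z_iᶜ(z_iᶜ)ᵀ + λ_pres·I_k and C := (1/N)Σ_i h_iᶜ(z_iᶜ)ᵀ + λ_pres·W̃. Then the strictly convex objective F(W) := (1/N)Σ_i ‖h_iᶜ − W z_iᶜ‖₂² + λ_geom·‖(I − Π̂)W‖_F² + λ_pres·‖W − W̃‖_F² over W ∈ ℝ^{d×k} has the unique minimizer W* = Π̂·C·B⁻¹ +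 (I − Π̂)·C·(B + λ_geom·I_k)⁻¹; equivalently, W* is the unique solution of the normal equation [λ_pres·I_d + λ_geom·(I_d − Π̂)]·W + W·(1/N)Σ_i z_iᶜ(z_iᶜ)ᵀ = (1/N)Σ_i h_iᶜ(z_iᶜ)ᵀ + λ_pres·W̃. -/
/-!
Since `Π̂ (I - Π̂) = 0`, multiplying the normal equation on the left by `Π̂` and by `I - Π̂`
splits it into the two ridge equations `(Π̂ W) B = Π̂ C` and
`((I - Π̂) W)(B + λ_geom I) = (I - Π̂) C`, and conversely these two add back up to it. As `B` and
`B + λ_geom I` are positive definite, this pins down `Π̂ W` and `(I - Π̂) W`, hence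
`W = Π̂ W + (I - Π̂) W`.
For minimality, expand the quadratic `F` around `W*`: the linear term in `D` is twice the
Frobenius pairing of `D` with the residual of the normal equation, which vanishes, and the
quadratic term is at least `λ_pres ‖D‖_F²`.
-/

open Matrix BigOperators

section NormalEquation

variable {R : Type*} [CommRing R] {m n : Type*}

theorem mul_eq_iff_eq_mul_inv_of_isUnit [Fintype n] [DecidableEq n] {M : Matrix n n R}
    (hM : IsUnit M) (X Y : Matrix m n R) : X * M = Y ↔ X = Y * M⁻¹ := by
  let := hM.invertible
  rw [eq_comm, ← mul_inv_eq_iff_eq_mul_of_invertible, eq_comm]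

variable [Fintype m] [DecidableEq m] {P : Matrix m m R}

theorem eq_mul_add_one_sub_mul_iff (hP : IsIdempotentElem P) (U V W : Matrix m n R) :
    W = P * U + (1 - P) * V ↔ P * W = P * U ∧ (1 - P) * W = (1 - P) * V := by
  constructor
  · rintro rfl
    simp only [Matrix.mul_add, ← Matrix.mul_assoc, hP.eq, hP.one_sub.eq, hP.mul_one_sub_self,
      hP.one_sub_mul_self, Matrix.zero_mul, add_zero, zero_add, and_self]
  · rintro ⟨hPW, hQW⟩
    rw [← hPW, ← hQW, ← Matrix.add_mul, add_sub_cancel, Matrix.one_mul]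

variable [Fintype n] [DecidableEq n]

theorem normal_eq_iff_projected_eqs (hP : IsIdempotentElem P) (a b : R) (S : Matrix n n R)
    (C W : Matrix m n R) :
    (a • 1 + b • (1 - P)) * W + W * S = C ↔
      P * W * (S + a • 1) = P * C ∧ (1 - P) * W * (S + (a + b) • 1) = (1 - P) * C := by
  constructor
  · rintro rfl
    simp only [Matrix.mul_add, Matrix.add_mul, Matrix.mul_smul, Matrix.smul_mul, Matrix.mul_one,
      Matrix.one_mul, ← Matrix.mul_assoc, hP.one_sub.eq, hP.mul_one_sub_self, Matrix.zero_mul,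
      smul_zero, add_smul]
    constructor <;> abel
  · rintro ⟨hPC, hQC⟩
    have hC : C = P * C + (1 - P) * C := by rw [← Matrix.add_mul, add_sub_cancel, Matrix.one_mul]
    rw [hC, ← hPC, ← hQC]
    simp only [Matrix.mul_add, Matrix.add_mul, Matrix.mul_smul, Matrix.smul_mul, Matrix.mul_one,
      Matrix.one_mul, Matrix.sub_mul, smul_sub, add_smul]
    abel

theorem normal_eq_iff_eq_closed_form (hP : IsIdempotentElem P) (a b : R) (S : Matrix n n R)
    (C W : Matrix m n R) (ha : IsUnit (S + a • 1)) (hab : IsUnit (S + (a + b) • 1)) :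
    (a • 1 + b • (1 - P)) * W + W * S = C ↔
      W = P * C * (S + a • 1)⁻¹ + (1 - P) * C * (S + (a + b) • 1)⁻¹ := by
  rw [normal_eq_iff_projected_eqs hP, mul_eq_iff_eq_mul_inv_of_isUnit ha,
    mul_eq_iff_eq_mul_inv_of_isUnit hab, Matrix.mul_assoc P C, Matrix.mul_assoc (1 - P) C,
    eq_mul_add_one_sub_mul_iff hP]

end NormalEquation

section Frobenius

variable {m n : ℕ}

theorem frobNorm_sq_eq_trace (A : Matrix (Fin m) (Fin n) ℝ) :
    frobNorm A ^ 2 = (Aᵀ * A).trace := by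
  rw [frobNorm, Real.sq_sqrt (by positivity)]
  simp only [trace, diag, mul_apply, transpose_apply, sq]
  exact Finset.sum_comm

theorem frobNorm_add_sq (A B : Matrix (Fin m) (Fin n) ℝ) :
    frobNorm (A + B) ^ 2 = frobNorm A ^ 2 + 2 * (Aᵀ * B).trace + frobNorm B ^ 2 := by
  have hBA : (Bᵀ * A).trace = (Aᵀ * B).trace := by
    rw [← trace_transpose, transpose_mul, transpose_transpose]
  simp only [frobNorm_sq_eq_trace, transpose_add, Matrix.add_mul, Matrix.mul_add, trace_add, hBA]
  ring

theorem frobNorm_pos {A : Matrix (Fin m) (Fin n) ℝ} (hA : A ≠ 0) : 0 < frobNorm A := by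
  refine (show 0 ≤ frobNorm A from Real.sqrt_nonneg _).lt_of_ne' fun h => hA ?_
  rw [← trace_conjTranspose_mul_self_eq_zero_iff, conjTranspose_eq_transpose_of_trivial,
    ← frobNorm_sq_eq_trace, h, sq, zero_mul]

theorem sum_vecMulVec_eq_transpose_mul {N : ℕ} (u : Fin N → Fin m → ℝ) (v : Fin N → Fin n → ℝ) :
    ∑ i, vecMulVec (u i) (v i) = (of u)ᵀ * of v := by
  ext a b
  simp [Matrix.sum_apply, vecMulVec_apply, mul_apply]

theorem sum_sq_sub_mulVec_eq_frobNorm_sq {N : ℕ} (h : Fin N → Fin m → ℝ) (z : Fin N → Fin n → ℝ)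
    (W : Matrix (Fin m) (Fin n) ℝ) :
    ∑ i, ∑ j, (h i j - W.mulVec (z i) j) ^ 2 = frobNorm (W * (of z)ᵀ - (of h)ᵀ) ^ 2 := by
  rw [frobNorm, Real.sq_sqrt (by positivity), Finset.sum_comm]
  refine Finset.sum_congr rfl fun j _ => Finset.sum_congr rfl fun i _ => ?_
  simp only [Matrix.sub_apply, mul_apply, mulVec, dotProduct, transpose_apply, of_apply]
  ring

end Frobenius

section RidgeObjective

variable {d k n e : ℕ} (c₀ c₁ c₂ : ℝ) (H : Matrix (Fin d) (Fin n) ℝ) (Z : Matrix (Fin k) (Fin n) ℝ)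
  (Q : Matrix (Fin e) (Fin d) ℝ) (W₀ : Matrix (Fin d) (Fin k) ℝ)

noncomputable def ridgeObjective (W : Matrix (Fin d) (Fin k) ℝ) : ℝ :=
  c₀ * frobNorm (W * Z - H) ^ 2 + c₁ * frobNorm (Q * W) ^ 2 + c₂ * frobNorm (W - W₀) ^ 2

variable {c₀ c₁ c₂ H Z Q W₀}

theorem ridgeObjective_add (W D : Matrix (Fin d) (Fin k) ℝ) :
    ridgeObjective c₀ c₁ c₂ H Z Q W₀ (W + D) = ridgeObjective c₀ c₁ c₂ H Z Q W₀ W +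
      2 * ((c₀ • ((W * Z - H) * Zᵀ) + c₁ • (Qᵀ * Q * W) + c₂ • (W - W₀))ᵀ * D).trace +
      (c₀ * frobNorm (D * Z) ^ 2 + c₁ * frobNorm (Q * D) ^ 2 + c₂ * frobNorm D ^ 2) := by
  have hres : (W + D) * Z - H = (W * Z - H) + D * Z := by rw [Matrix.add_mul]; abel
  have hdev : W + D - W₀ = (W - W₀) + D := by abel
  have hZ : ((W * Z - H)ᵀ * (D * Z)).trace = (((W * Z - H) * Zᵀ)ᵀ * D).trace := by
    rw [transpose_mul, transpose_transpose, Matrix.mul_assoc, trace_mul_comm Z, Matrix.mul_assoc]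
  have hQ : ((Q * W)ᵀ * (Q * D)).trace = ((Qᵀ * Q * W)ᵀ * D).trace := by
    simp only [transpose_mul, transpose_transpose, Matrix.mul_assoc]
  rw [ridgeObjective, ridgeObjective, hres, Matrix.mul_add, hdev, frobNorm_add_sq,
    frobNorm_add_sq, frobNorm_add_sq, hZ, hQ]
  simp only [transpose_add, transpose_smul, Matrix.add_mul, Matrix.smul_mul, trace_add,
    trace_smul, smul_eq_mul]
  ring

theorem ridgeObjective_lt_of_normal_eq (hc₀ : 0 ≤ c₀) (hc₁ : 0 ≤ c₁) (hc₂ : 0 < c₂)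
    {W : Matrix (Fin d) (Fin k) ℝ}
    (hW : (c₂ • 1 + c₁ • (Qᵀ * Q)) * W + W * (c₀ • (Z * Zᵀ)) = c₀ • (H * Zᵀ) + c₂ • W₀)
    {V : Matrix (Fin d) (Fin k) ℝ} (hV : V ≠ W) :
    ridgeObjective c₀ c₁ c₂ H Z Q W₀ W < ridgeObjective c₀ c₁ c₂ H Z Q W₀ V := by
  have hgrad : c₀ • ((W * Z - H) * Zᵀ) + c₁ • (Qᵀ * Q * W) + c₂ • (W - W₀) = 0 := by
    rw [← sub_eq_zero.2 hW]
    simp only [Matrix.add_mul, Matrix.sub_mul, Matrix.smul_mul, Matrix.mul_smul, Matrix.one_mul,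
      Matrix.mul_assoc, smul_sub]
    abel
  obtain ⟨D, rfl⟩ : ∃ D, V = W + D := ⟨V - W, by abel⟩
  have hD : 0 < frobNorm D := frobNorm_pos fun h => hV (by rw [h, add_zero])
  rw [ridgeObjective_add, hgrad, transpose_zero, Matrix.zero_mul, trace_zero, mul_zero, add_zero]
  have := mul_nonneg hc₀ (sq_nonneg (frobNorm (D * Z)))
  have := mul_nonneg hc₁ (sq_nonneg (frobNorm (Q * D)))
  have := mul_pos hc₂ (pow_pos hD 2)
  linarith

end RidgeObjective

theorem gae_step2_closed_form_general
    {d k N : ℕ}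
    (hc : Fin N → Fin d → ℝ) (zc : Fin N → Fin k → ℝ)
    (Phat : Matrix (Fin d) (Fin d) ℝ)
    (hPsymm : Phat.IsSymm) (hPidem : Phat * Phat = Phat)
    (Wtilde : Matrix (Fin d) (Fin k) ℝ)
    (lgeom lpres : ℝ) (hlgeom : 0 ≤ lgeom) (hlpres : 0 < lpres)
    (B : Matrix (Fin k) (Fin k) ℝ)
    (hB : B = (N : ℝ)⁻¹ • (∑ i, vecMulVec (zc i) (zc i)) + lpres • 1)
    (C : Matrix (Fin d) (Fin k) ℝ)
    (hC : C = (N : ℝ)⁻¹ • (∑ i, vecMulVec (hc i) (zc i)) + lpres • Wtilde)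
    (F : Matrix (Fin d) (Fin k) ℝ → ℝ)
    (hF : F = fun W =>
      (N : ℝ)⁻¹ * (∑ i, ∑ j, (hc i j - W.mulVec (zc i) j) ^ 2) +
        lgeom * frobNorm ((1 - Phat) * W) ^ 2 + lpres * frobNorm (W - Wtilde) ^ 2)
    (Wstar : Matrix (Fin d) (Fin k) ℝ)
    (hWstar : Wstar = Phat * C * B⁻¹ + (1 - Phat) * C * (B + lgeom • 1)⁻¹) :
    (∀ W : Matrix (Fin d) (Fin k) ℝ, W ≠ Wstar → F Wstar < F W) ∧
      ((lpres • (1 : Matrix (Fin d) (Fin d) ℝ) + lgeom • (1 - Phat)) * Wstar +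
          Wstar * ((N : ℝ)⁻¹ • (∑ i, vecMulVec (zc i) (zc i))) =
        (N : ℝ)⁻¹ • (∑ i, vecMulVec (hc i) (zc i)) + lpres • Wtilde) ∧
      (∀ W : Matrix (Fin d) (Fin k) ℝ,
        (lpres • (1 : Matrix (Fin d) (Fin d) ℝ) + lgeom • (1 - Phat)) * W +
            W * ((N : ℝ)⁻¹ • (∑ i, vecMulVec (zc i) (zc i))) =
          (N : ℝ)⁻¹ • (∑ i, vecMulVec (hc i) (zc i)) + lpres • Wtilde →
        W = Wstar) := by
  set S := (N : ℝ)⁻¹ • ∑ i, vecMulVec (zc i) (zc i)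
  have hS : S.PosSemidef := .smul (posSemidef_sum _ fun i _ => by
    simpa using posSemidef_vecMulVec_self_star (zc i)) (by positivity)
  have hunit : ∀ c : ℝ, 0 < c → IsUnit (S + c • 1) := fun c hc =>
    (PosDef.posSemidef_add hS (PosDef.one.smul hc)).isUnit
  have hB₂ : B + lgeom • 1 = S + (lpres + lgeom) • 1 := by rw [hB, add_smul, add_assoc]
  have hnormal : ∀ W, (lpres • 1 + lgeom • (1 - Phat)) * W + W * S =
      (N : ℝ)⁻¹ • (∑ i, vecMulVec (hc i) (zc i)) + lpres • Wtilde ↔ W = Wstar := fun W => by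
    rw [hWstar, hB₂, hB, ← hC]
    exact normal_eq_iff_eq_closed_form hPidem lpres lgeom S C W (hunit _ hlpres)
      (hunit _ (by positivity))
  refine ⟨fun W hW => ?_, (hnormal Wstar).2 rfl, fun W => (hnormal W).1⟩
  have hQ : (1 - Phat)ᵀ * (1 - Phat) = 1 - Phat := by
    rw [transpose_sub, transpose_one, hPsymm.eq]
    exact IsIdempotentElem.one_sub hPidem
  have hFW : F = ridgeObjective (N : ℝ)⁻¹ lgeom lpres (of hc)ᵀ (of zc)ᵀ (1 - Phat) Wtilde := by
    funext V
    simp only [hF, ridgeObjective, sum_sq_sub_mulVec_eq_frobNorm_sq]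
  rw [hFW]
  refine ridgeObjective_lt_of_normal_eq (by positivity) hlgeom hlpres ?_ hW
  rw [hQ, transpose_transpose, ← sum_vecMulVec_eq_transpose_mul, ← sum_vecMulVec_eq_transpose_mul]
  exact (hnormal Wstar).2 rfl

/-- **GAE Step-2 closed-form decoder refit (Eqs. 8–11, Appendix A.6).**
For centered data `h_iᶜ, z_iᶜ`, an orthogonal projection matrix `Π̂`, `W̃ ∈ ℝ^{d×k}`,
`λ_geom ≥ 0`, `λ_pres > 0`, and
`B = (1/N)Σ z_iᶜ z_iᶜᵀ + λ_pres I`, `C = (1/N)Σ h_iᶜ z_iᶜᵀ + λ_pres W̃`, the strictly convex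
objective `F(W) = (1/N)Σ‖h_iᶜ − W z_iᶜ‖² + λ_geom‖(I−Π̂)W‖_F² + λ_pres‖W−W̃‖_F²` has unique
minimizer `W* = Π̂ C B⁻¹ + (I−Π̂) C (B+λ_geom I)⁻¹`, which is also the unique solution of the
normal equation `[λ_pres I + λ_geom (I−Π̂)]W + W·(1/N)Σ z_iᶜ z_iᶜᵀ = (1/N)Σ h_iᶜ z_iᶜᵀ + λ_pres W̃`. -/
theorem gae_step2_closed_form
    {d k N : ℕ} (hN : 0 < N)
    (hc : Fin N → Fin d → ℝ) (zc : Fin N → Fin k → ℝ)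
    (hcenterh : (∑ i, hc i) = 0) (hcenterz : (∑ i, zc i) = 0)
    (Phat : Matrix (Fin d) (Fin d) ℝ)
    (hPsymm : Phat.IsSymm) (hPidem : Phat * Phat = Phat)
    (Wtilde : Matrix (Fin d) (Fin k) ℝ)
    (lgeom lpres : ℝ) (hlgeom : 0 ≤ lgeom) (hlpres : 0 < lpres)
    (B : Matrix (Fin k) (Fin k) ℝ)
    (hB : B = (N : ℝ)⁻¹ • (∑ i, vecMulVec (zc i) (zc i)) + lpres • 1)
    (C : Matrix (Fin d) (Fin k) ℝ)
    (hC : C = (N : ℝ)⁻¹ • (∑ i, vecMulVec (hc i) (zc i)) + lpres • Wtilde)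
    (F : Matrix (Fin d) (Fin k) ℝ → ℝ)
    (hF : F = fun W =>
      (N : ℝ)⁻¹ * (∑ i, ∑ j, (hc i j - W.mulVec (zc i) j) ^ 2) +
        lgeom * frobNorm ((1 - Phat) * W) ^ 2 + lpres * frobNorm (W - Wtilde) ^ 2)
    (Wstar : Matrix (Fin d) (Fin k) ℝ)
    (hWstar : Wstar = Phat * C * B⁻¹ + (1 - Phat) * C * (B + lgeom • 1)⁻¹) :
    (∀ W : Matrix (Fin d) (Fin k) ℝ, W ≠ Wstar → F Wstar < F W) ∧
      ((lpres • (1 : Matrix (Fin d) (Fin d) ℝ) + lgeom • (1 - Phat)) * Wstar +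
          Wstar * ((N : ℝ)⁻¹ • (∑ i, vecMulVec (zc i) (zc i))) =
        (N : ℝ)⁻¹ • (∑ i, vecMulVec (hc i) (zc i)) + lpres • Wtilde) ∧
      (∀ W : Matrix (Fin d) (Fin k) ℝ,
        (lpres • (1 : Matrix (Fin d) (Fin d) ℝ) + lgeom • (1 - Phat)) * W +
            W * ((N : ℝ)⁻¹ • (∑ i, vecMulVec (zc i) (zc i))) =
          (N : ℝ)⁻¹ • (∑ i, vecMulVec (hc i) (zc i)) + lpres • Wtilde →
        W = Wstar) :=
  gae_step2_closed_form_general hc zc Phat hPsymm hPidem Wtilde lgeom lpres hlgeom hlpres B hB C hC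
    F hF Wstar hWstar
end
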